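/- For every prime θ with θ ≡ 1 (mod 6) and θ > 13, there exist integers a, b with θ ∤ a, θ ∤ b, and b^3 ≡ a^3 + 1 (mod θ); that is, every prime of the form 6a + 1 larger than 13 has two nonzero consecutive cubic residues. (Germain's theorem in her letter to Legendre.) -/

import Mathlib

/-!
Let `m = (q - 1) / 3` and `χ x = x ^ m`, the cubic character of `𝔽_q`, with values in
`{0, 1, ζ, ζ²}`; a nonzero `x` is a cube iff `χ x = 1`. Write `(c, d)` for the number of `x` with
`χ x = c` and `χ (x + 1) = d`, and suppose `(1, 1) = 0`. The maps `x ↦ -1 - x` and `x ↦ x⁻¹` give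
`(c, d) = (d, c)` and `(ζ, ζ) = (ζ², 1)`, and multiplying by an element of character `ζ` shows that
`χ = 1` and `χ = ζ` have equally many solutions. Comparing these two rows (the first one also
contains `x = -1`) yields `(ζ, ζ²) = 1`. The unique element of that set is then fixed by
`x ↦ (-1 - x)⁻¹`, hence is a root of `x² + x + 1`. Now take `ζ = χ 2`, which is not `1` since `1, 2`
are not consecutive cubes; `χ 3 ≠ 1` since `8, 9` are not. So `3` (if `χ 3 = ζ`, as `χ 4 = ζ²`) or
`2` (if `χ 3 = ζ²`) is that root, and `13 = 0` or `7 = 0` in `𝔽_q`.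
-/

open Finset

theorem IsCyclic.exists_pow_eq_of_pow_eq_one {G : Type*} [Group G] [Finite G] [IsCyclic G] {d m : ℕ}
    (hcard : Nat.card G = d * m) {x : G} (hx : x ^ m = 1) : ∃ y : G, y ^ d = x := by
  obtain ⟨g, hg⟩ := IsCyclic.exists_generator (α := G)
  obtain ⟨e, rfl⟩ := mem_powers_iff_mem_zpowers.mpr (hg x)
  have hm : 0 < m := Nat.pos_of_mul_pos_left (hcard ▸ Nat.card_pos)
  have hdvd : d * m ∣ e * m := by
    rw [← hcard, ← orderOf_eq_card_of_forall_mem_zpowers hg]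
    exact orderOf_dvd_of_pow_eq_one (by rwa [← pow_mul] at hx)
  obtain ⟨c, rfl⟩ := Nat.dvd_of_mul_dvd_mul_right hm hdvd
  exact ⟨g ^ c, by rw [← pow_mul, mul_comm]⟩

namespace FiniteField

variable {F : Type*} [Field F] [Fintype F]

theorem ne_zero_of_card_eq_mul_add_one {d m : ℕ} (hcard : Fintype.card F = d * m + 1) :
    m ≠ 0 := by
  rintro rfl
  have := Fintype.one_lt_card (α := F)
  omega

theorem exists_pow_eq_of_pow_eq_one {d m : ℕ} (hcard : Fintype.card F = d * m + 1) {x : F}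
    (hx : x ^ m = 1) : ∃ y : F, y ^ d = x := by
  have hx0 : x ≠ 0 := ne_zero_pow (ne_zero_of_card_eq_mul_add_one hcard) (hx ▸ one_ne_zero)
  obtain ⟨y, hy⟩ := IsCyclic.exists_pow_eq_of_pow_eq_one (x := Units.mk0 x hx0)
    (by rw [Nat.card_units, Nat.card_eq_fintype_card, hcard, Nat.add_sub_cancel])
    (Units.ext (by simpa using hx))
  exact ⟨y, by simpa using congrArg Units.val hy⟩

theorem pow_pow_three_eq_one {m : ℕ} (hcard : Fintype.card F = 3 * m + 1) {y : F} (hy : y ≠ 0) :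
    (y ^ m) ^ 3 = 1 := by
  rw [← pow_mul, mul_comm, ← Nat.add_sub_cancel (3 * m) 1, ← hcard]
  exact pow_card_sub_one_eq_one y hy

theorem pow_eq_zero_or_eq_one_or_eq_or_eq_sq {m : ℕ} (hcard : Fintype.card F = 3 * m + 1) {ζ : F}
    (hζ : IsPrimitiveRoot ζ 3) (y : F) : y ^ m = 0 ∨ y ^ m = 1 ∨ y ^ m = ζ ∨ y ^ m = ζ ^ 2 := by
  rcases eq_or_ne y 0 with rfl | hy
  · exact Or.inl (zero_pow (ne_zero_of_card_eq_mul_add_one hcard))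
  obtain ⟨i, hi, hζi⟩ := hζ.eq_pow_of_pow_eq_one (pow_pow_three_eq_one hcard hy)
  interval_cases i <;> simp_all

end FiniteField

theorem IsPrimitiveRoot.inv_sq_eq_self {M : Type*} [DivisionCommMonoid M] {ζ : M}
    (hζ : IsPrimitiveRoot ζ 3) : (ζ ^ 2)⁻¹ = ζ :=
  inv_eq_of_mul_eq_one_right (by rw [← pow_succ, hζ.pow_eq_one])

section Cyclotomic

variable {F : Type*} [Field F] [Fintype F] [DecidableEq F] {m : ℕ} {c d x ζ : F}

/-- For `m = (q - 1) / 3` the cardinalities of these sets are the cyclotomic numbers of order 3. -/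
def cyclotomicSet (m : ℕ) (c d : F) : Finset F := {x | x ^ m = c ∧ (x + 1) ^ m = d}

@[simp]
theorem mem_cyclotomicSet : x ∈ cyclotomicSet m c d ↔ x ^ m = c ∧ (x + 1) ^ m = d := by
  simp [cyclotomicSet]

theorem ne_zero_of_mem_cyclotomicSet (hm0 : m ≠ 0) (hc : c ≠ 0) (hx : x ∈ cyclotomicSet m c d) :
    x ≠ 0 :=
  ne_zero_pow hm0 ((mem_cyclotomicSet.mp hx).1 ▸ hc)

theorem neg_one_sub_mem_cyclotomicSet (hm : Even m) (hx : x ∈ cyclotomicSet m c d) :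
    -1 - x ∈ cyclotomicSet m d c := by
  rw [mem_cyclotomicSet] at hx ⊢
  rw [show -1 - x = -(x + 1) by ring, show -(x + 1) + 1 = -x by ring, hm.neg_pow, hm.neg_pow]
  exact hx.symm

theorem inv_mem_cyclotomicSet (hx0 : x ≠ 0) (hx : x ∈ cyclotomicSet m c d) :
    x⁻¹ ∈ cyclotomicSet m c⁻¹ (d / c) := by
  rw [mem_cyclotomicSet] at hx ⊢
  rw [show x⁻¹ + 1 = (x + 1) / x by field_simp; ring, div_pow, inv_pow, hx.1, hx.2]
  exact ⟨rfl, rfl⟩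

theorem card_cyclotomicSet_comm (hm : Even m) (c d : F) :
    #(cyclotomicSet m c d) = #(cyclotomicSet m d c) :=
  card_nbij' (fun x ↦ -1 - x) (fun x ↦ -1 - x) (fun _ hx ↦ neg_one_sub_mem_cyclotomicSet hm hx)
    (fun _ hx ↦ neg_one_sub_mem_cyclotomicSet hm hx) (fun _ _ ↦ by ring) (fun _ _ ↦ by ring)

theorem card_cyclotomicSet_inv (hm0 : m ≠ 0) (hc : c ≠ 0) (d : F) :
    #(cyclotomicSet m c d) = #(cyclotomicSet m c⁻¹ (d / c)) := by
  refine card_nbij' (·⁻¹) (·⁻¹) (fun x hx ↦ inv_mem_cyclotomicSet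
    (ne_zero_of_mem_cyclotomicSet hm0 hc hx) hx) (fun y hy ↦ ?_) (fun x _ ↦ inv_inv x)
    (fun y _ ↦ inv_inv y)
  have h := inv_mem_cyclotomicSet (ne_zero_of_mem_cyclotomicSet hm0 (inv_ne_zero hc) hy) hy
  rwa [inv_inv, div_inv_eq_mul, div_mul_cancel₀ d hc] at h

theorem mem_cyclotomicSet_zero_right (hm0 : m ≠ 0) (hm : Even m) :
    x ∈ cyclotomicSet m c 0 ↔ x = -1 ∧ c = 1 := by
  rw [mem_cyclotomicSet, pow_eq_zero_iff hm0, add_eq_zero_iff_eq_neg]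
  constructor
  · rintro ⟨rfl, rfl⟩
    exact ⟨rfl, hm.neg_one_pow⟩
  · rintro ⟨rfl, rfl⟩
    exact ⟨hm.neg_one_pow, rfl⟩

theorem card_cyclotomicSet_one_zero (hm0 : m ≠ 0) (hm : Even m) :
    #(cyclotomicSet m (1 : F) 0) = 1 :=
  card_eq_one.mpr ⟨-1, by ext; simp [mem_cyclotomicSet_zero_right hm0 hm]⟩

theorem cyclotomicSet_zero_right_eq_empty (hm0 : m ≠ 0) (hm : Even m) (hc : c ≠ 1) :
    cyclotomicSet m c 0 = ∅ := by
  ext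
  simp [mem_cyclotomicSet_zero_right hm0 hm, hc]

theorem card_filter_pow_eq_eq_card_filter_mul {g : F} (hg : g ≠ 0) (c : F) :
    #{x : F | x ^ m = c} = #{x : F | x ^ m = g ^ m * c} :=
  card_nbij' (g * ·) (g⁻¹ * ·) (fun x hx ↦ by simp_all [mul_pow])
    (fun y hy ↦ by simp_all [mul_pow]) (fun x _ ↦ by simp [hg]) (fun y _ ↦ by simp [hg])

theorem card_filter_pow_eq_eq_sum_card_cyclotomicSet (hcard : Fintype.card F = 3 * m + 1)
    (hζ : IsPrimitiveRoot ζ 3) (c : F) :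
    #{x : F | x ^ m = c} = #(cyclotomicSet m c 0) + #(cyclotomicSet m c 1) +
      #(cyclotomicSet m c ζ) + #(cyclotomicSet m c (ζ ^ 2)) := by
  have hζ0 : ζ ≠ 0 := hζ.ne_zero (by norm_num)
  have hζ1 : ζ ≠ 1 := hζ.ne_one (by norm_num)
  have hζ21 : ζ ^ 2 ≠ 1 := hζ.pow_ne_one_of_pos_of_lt (by norm_num) (by norm_num)
  have hζζ2 : ζ ≠ ζ ^ 2 := fun h ↦ by
    have := hζ.pow_inj (i := 1) (j := 2) (by norm_num) (by norm_num) (by rwa [pow_one])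
    omega
  rw [card_eq_sum_card_fiberwise (f := fun x ↦ (x + 1) ^ m) (t := {0, 1, ζ, ζ ^ 2})
    (fun x _ ↦ by simpa using FiniteField.pow_eq_zero_or_eq_one_or_eq_or_eq_sq hcard hζ (x + 1))]
  rw [sum_insert (by simp [hζ0.symm, (pow_ne_zero 2 hζ0).symm]),
    sum_insert (by simp [hζ1.symm, hζ21.symm]), sum_insert (by simpa using hζζ2), sum_singleton,
    ← add_assoc, ← add_assoc]
  simp only [filter_filter]
  rfl

theorem card_cyclotomicSet_eq_one (hcard : Fintype.card F = 3 * m + 1) (hm : Even m)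
    (hζ : IsPrimitiveRoot ζ 3) {g : F} (hg : g ^ m = ζ) (h11 : cyclotomicSet m (1 : F) 1 = ∅) :
    #(cyclotomicSet m ζ (ζ ^ 2)) = 1 := by
  have hm0 := FiniteField.ne_zero_of_card_eq_mul_add_one hcard
  have hζ0 : ζ ≠ 0 := hζ.ne_zero (by norm_num)
  have hg0 : g ≠ 0 := by
    rintro rfl
    exact hζ0 (hg ▸ zero_pow hm0)
  have hfiber := card_filter_pow_eq_eq_card_filter_mul (m := m) hg0 1
  rw [hg, mul_one, card_filter_pow_eq_eq_sum_card_cyclotomicSet hcard hζ,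
    card_filter_pow_eq_eq_sum_card_cyclotomicSet hcard hζ] at hfiber
  have hcomm := card_cyclotomicSet_comm hm ζ 1
  have hinv : #(cyclotomicSet m ζ ζ) = #(cyclotomicSet m 1 (ζ ^ 2)) := by
    rw [card_cyclotomicSet_comm hm 1, card_cyclotomicSet_inv hm0 (pow_ne_zero 2 hζ0), one_div,
      hζ.inv_sq_eq_self]
  rw [card_cyclotomicSet_one_zero hm0 hm,
    cyclotomicSet_zero_right_eq_empty hm0 hm (hζ.ne_one (by norm_num)), h11] at hfiber
  simp only [card_empty] at hfiber
  omega

theorem sq_add_self_add_one_eq_zero_of_mem_cyclotomicSet (hm0 : m ≠ 0) (hm : Even m)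
    (hζ : IsPrimitiveRoot ζ 3) (hone : #(cyclotomicSet m ζ (ζ ^ 2)) = 1) {x : F}
    (hx : x ∈ cyclotomicSet m ζ (ζ ^ 2)) : x ^ 2 + x + 1 = 0 := by
  have hζ0 : ζ ≠ 0 := hζ.ne_zero (by norm_num)
  have hτ := neg_one_sub_mem_cyclotomicSet hm hx
  have hτ0 := ne_zero_of_mem_cyclotomicSet hm0 (pow_ne_zero 2 hζ0) hτ
  have hστ := inv_mem_cyclotomicSet hτ0 hτ
  rw [hζ.inv_sq_eq_self, div_eq_mul_inv, hζ.inv_sq_eq_self, ← sq] at hστ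
  obtain ⟨x₀, hx₀⟩ := card_eq_one.mp hone
  rw [hx₀, mem_singleton] at hx hστ
  have hfix := mul_inv_cancel₀ hτ0
  rw [hστ, ← hx] at hfix
  linear_combination -hfix

end Cyclotomic

theorem cyclotomicSet_one_one_nonempty {F : Type*} [Field F] [Fintype F] [DecidableEq F] {k : ℕ}
    (hcard : Fintype.card F = 6 * k + 1) (hchar : 13 < ringChar F) :
    (cyclotomicSet (2 * k) (1 : F) 1).Nonempty := by
  set m := 2 * k
  have hcard' : Fintype.card F = 3 * m + 1 := by omega
  have hm : Even m := even_two_mul k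
  have hm0 := FiniteField.ne_zero_of_card_eq_mul_add_one hcard'
  have hne (n : ℕ) (h0 : 0 < n) (hn : n ≤ 13) : (n : F) ≠ 0 := fun h ↦ by
    have := Nat.le_of_dvd h0 ((ringChar.spec F n).mp h)
    omega
  have h2 : (2 : F) ≠ 0 := by exact_mod_cast hne 2 (by norm_num) (by norm_num)
  have h3 : (3 : F) ≠ 0 := by exact_mod_cast hne 3 (by norm_num) (by norm_num)
  by_contra h11
  rw [not_nonempty_iff_eq_empty] at h11
  have hno (x : F) (hx : x ^ m = 1) (hx1 : (x + 1) ^ m = 1) : False := by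
    simpa [h11] using mem_cyclotomicSet.mpr ⟨hx, hx1⟩
  set ζ := (2 : F) ^ m with hζdef
  have hζ1 : ζ ≠ 1 := fun h ↦ hno 1 (one_pow m) (by rwa [one_add_one_eq_two])
  have hζ : IsPrimitiveRoot ζ 3 := isPrimitiveRoot_of_mem_nthRootsFinset Nat.prime_three
    ((Polynomial.mem_nthRootsFinset three_pos 1).mpr (FiniteField.pow_pow_three_eq_one hcard' h2))
    hζ1
  have h3m : (3 : F) ^ m ≠ 1 := fun h ↦ hno 8
    (by rw [show (8 : F) = 2 ^ 3 by norm_num, pow_right_comm, hζ.pow_eq_one])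
    (by rw [show (8 + 1 : F) = 3 ^ 2 by norm_num, pow_right_comm, h, one_pow])
  have hroot (x : F) : x ∈ cyclotomicSet m ζ (ζ ^ 2) → x ^ 2 + x + 1 = 0 :=
    sq_add_self_add_one_eq_zero_of_mem_cyclotomicSet hm0 hm hζ
      (card_cyclotomicSet_eq_one hcard' hm hζ hζdef.symm h11)
  rcases FiniteField.pow_eq_zero_or_eq_one_or_eq_or_eq_sq hcard' hζ 3 with h | h | h | h
  · exact pow_ne_zero m h3 h
  · exact h3m h
  · have h13 := hroot 3 (mem_cyclotomicSet.mpr ⟨h, by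
      rw [show (3 + 1 : F) = 2 ^ 2 by norm_num, pow_right_comm]⟩)
    exact hne 13 (by norm_num) le_rfl (by linear_combination h13)
  · have h7 := hroot 2 (mem_cyclotomicSet.mpr ⟨rfl, by
      rw [show (2 + 1 : F) = 3 by norm_num, h]⟩)
    exact hne 7 (by norm_num) (by norm_num) (by linear_combination h7)

/-- Germain's theorem from her letter to Legendre: every prime θ ≡ 1 (mod 6)
with θ > 13 has two nonzero consecutive cubic residues. -/
theorem consecutive_cubic_residues
    (θ : ℕ) (hθ : θ.Prime) (hmod : θ ≡ 1 [MOD 6]) (hbig : 13 < θ) :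
    ∃ a b : ℤ, ¬ (θ : ℤ) ∣ a ∧ ¬ (θ : ℤ) ∣ b ∧ b ^ 3 ≡ a ^ 3 + 1 [ZMOD (θ : ℤ)] := by
  have := Fact.mk hθ
  have : NeZero θ := ⟨hθ.ne_zero⟩
  obtain ⟨k, hk⟩ : ∃ k, θ = 6 * k + 1 := ⟨θ / 6, by rw [Nat.ModEq] at hmod; omega⟩
  have hcard : Fintype.card (ZMod θ) = 3 * (2 * k) + 1 := by rw [ZMod.card]; omega
  obtain ⟨x, hx⟩ := cyclotomicSet_one_one_nonempty (F := ZMod θ) (by rw [ZMod.card, hk])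
    (by rwa [ZMod.ringChar_zmod_n])
  rw [mem_cyclotomicSet] at hx
  obtain ⟨y, rfl⟩ := FiniteField.exists_pow_eq_of_pow_eq_one hcard hx.1
  obtain ⟨z, hz⟩ := FiniteField.exists_pow_eq_of_pow_eq_one hcard hx.2
  obtain ⟨a, rfl⟩ := ZMod.intCast_surjective y
  obtain ⟨b, rfl⟩ := ZMod.intCast_surjective z
  have hm0 : 2 * k ≠ 0 := by omega
  refine ⟨a, b, fun ha ↦ ?_, fun hb ↦ ?_,
    (ZMod.intCast_eq_intCast_iff _ _ _).mp (by push_cast; exact hz)⟩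
  · rw [← ZMod.intCast_zmod_eq_zero_iff_dvd] at ha
    simp [ha, hm0] at hx
  · rw [← ZMod.intCast_zmod_eq_zero_iff_dvd] at hb
    simp [← hz, hb, hm0] at hx
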